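/- arXiv:math/0509010 — 9 statements merged into one kernel-verified Lean document; each statement's English description precedes it below -/
import Mathlib

section
/- Let {S_y : y ∈ Y} be a product r.c.p. of R with respect to Q. Then R is absolutely continuous with respect to the product measure P⊗Q if there exists a product r.c.p. {S_y} of R with respect to Q such that S_y ≪ P for all y ∈ Y. Conversely, if R ≪ P⊗Q and a product r.c.p. exists, then there is a product r.c.p. {S_y'} with S_y' ≪ P for all y ∈ Y. -/
/-!
A product r.c.p. `S` presents `R` as the image under `Prod.swap` of the composition `Q ⊗ₘ S`;
if every `S y` is `≪ P`, this composition is `≪ Q ⊗ₘ const P = Q.prod P`.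
Conversely, if `f = dR/d(P ⊗ Q)`, then `y ↦ P.withDensity (f (·, y))` reproduces `R` on rectangles,
and since the `Y`-marginal of `R` is `Q`, these measures have total mass `1` for `Q`-a.e. `y`;
replacing them by `P` on the remaining null set gives a product r.c.p. absolutely continuous
with respect to `P`.
-/

open MeasureTheory Set

/-- `S` is a product regular conditional probability of `R` with respect to `Q`. -/
def IsProdRCP {X Y : Type*} [MeasurableSpace X] [MeasurableSpace Y]
    (Q : Measure Y) (R : Measure (X × Y)) (S : Y → Measure X) : Prop :=
  (∀ y, IsProbabilityMeasure (S y)) ∧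
  (∀ A : Set X, MeasurableSet A → Measurable fun y => S y A) ∧
  (∀ (A : Set X) (B : Set Y), MeasurableSet A → MeasurableSet B →
    R (A ×ˢ B) = ∫⁻ y in B, S y A ∂Q)

open ProbabilityTheory

section

variable {X Y : Type*} [MeasurableSpace X] [MeasurableSpace Y]
  {P : Measure X} {Q : Measure Y} {R : Measure (X × Y)}

namespace IsProdRCP

variable {S : Y → Measure X}

noncomputable def kernel (hS : IsProdRCP Q R S) : Kernel Y X :=
  ⟨S, Measure.measurable_of_measurable_coe S hS.2.1⟩

instance (hS : IsProdRCP Q R S) : IsMarkovKernel hS.kernel := ⟨hS.1⟩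

theorem eq_map_swap_compProd [SFinite Q] [IsFiniteMeasure R] (hS : IsProdRCP Q R S) :
    R = (Q ⊗ₘ hS.kernel).map Prod.swap := by
  have rect : ∀ A B, MeasurableSet A → MeasurableSet B →
      R (A ×ˢ B) = (Q ⊗ₘ hS.kernel).map Prod.swap (A ×ˢ B) := by
    intro A B hA hB
    rw [Measure.map_apply measurable_swap (hA.prod hB), preimage_swap_prod,
      Measure.compProd_apply_prod hB hA, hS.2.2 A B hA hB]
    rfl
  refine ext_of_generate_finite _ generateFrom_prod.symm isPiSystem_prod ?_ ?_
  · rintro _ ⟨A, hA, B, hB, rfl⟩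
    exact rect A B hA hB
  · simpa only [univ_prod_univ] using rect univ univ .univ .univ

theorem absolutelyContinuous_prod [SFinite P] [SFinite Q] [IsFiniteMeasure R]
    (hS : IsProdRCP Q R S) (hSP : ∀ y, S y ≪ P) : R ≪ P.prod Q := by
  have hcomp : Q ⊗ₘ hS.kernel ≪ Q ⊗ₘ Kernel.const Y P :=
    Measure.AbsolutelyContinuous.compProd_right (ae_of_all _ hSP)
  rw [Measure.compProd_const] at hcomp
  rw [hS.eq_map_swap_compProd, ← Measure.prod_swap]
  exact hcomp.map measurable_swap

end IsProdRCP

theorem measurableSet_lintegral_rnDeriv_prod_eq_one (P : Measure X) (Q : Measure Y)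
    (R : Measure (X × Y)) [SFinite P] :
    MeasurableSet {y | ∫⁻ x, R.rnDeriv (P.prod Q) (x, y) ∂P = 1} :=
  (Measure.measurable_rnDeriv _ _).lintegral_prod_left' (measurableSet_singleton 1)

noncomputable def rnDerivKernel (P : Measure X) (Q : Measure Y) (R : Measure (X × Y))
    [SFinite P] : Kernel Y X := by
  classical
  exact Kernel.piecewise (measurableSet_lintegral_rnDeriv_prod_eq_one P Q R)
    ((Kernel.const Y P).withDensity fun y x => R.rnDeriv (P.prod Q) (x, y)) (Kernel.const Y P)

theorem rnDerivKernel_apply_of_lintegral_eq_one [SFinite P] {y : Y}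
    (hy : ∫⁻ x, R.rnDeriv (P.prod Q) (x, y) ∂P = 1) :
    rnDerivKernel P Q R y = P.withDensity fun x => R.rnDeriv (P.prod Q) (x, y) := by
  have hmeas : Measurable (Function.uncurry fun y x => R.rnDeriv (P.prod Q) (x, y)) :=
    (Measure.measurable_rnDeriv _ _).comp measurable_swap
  rw [rnDerivKernel, Kernel.piecewise_apply, if_pos (by exact hy),
    Kernel.withDensity_apply _ hmeas, Kernel.const_apply]

theorem rnDerivKernel_apply_of_lintegral_ne_one [SFinite P] {y : Y}
    (hy : ∫⁻ x, R.rnDeriv (P.prod Q) (x, y) ∂P ≠ 1) : rnDerivKernel P Q R y = P := by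
  rw [rnDerivKernel, Kernel.piecewise_apply, if_neg (by exact hy), Kernel.const_apply]

instance [IsProbabilityMeasure P] : IsMarkovKernel (rnDerivKernel P Q R) := by
  refine ⟨fun y => ?_⟩
  by_cases hy : ∫⁻ x, R.rnDeriv (P.prod Q) (x, y) ∂P = 1
  · rw [rnDerivKernel_apply_of_lintegral_eq_one hy]
    exact ⟨by rwa [withDensity_apply _ .univ, Measure.restrict_univ]⟩
  · rw [rnDerivKernel_apply_of_lintegral_ne_one hy]
    infer_instance

theorem rnDerivKernel_absolutelyContinuous [SFinite P] (y : Y) : rnDerivKernel P Q R y ≪ P := by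
  by_cases hy : ∫⁻ x, R.rnDeriv (P.prod Q) (x, y) ∂P = 1
  · rw [rnDerivKernel_apply_of_lintegral_eq_one hy]
    exact withDensity_absolutelyContinuous _ _
  · rw [rnDerivKernel_apply_of_lintegral_ne_one hy]

section SigmaFinite

variable [SigmaFinite P] [SigmaFinite Q] [SigmaFinite R]

theorem measure_prod_eq_lintegral_rnDeriv (hR : R ≪ P.prod Q) (A : Set X) (B : Set Y) :
    R (A ×ˢ B) = ∫⁻ y in B, ∫⁻ x in A, R.rnDeriv (P.prod Q) (x, y) ∂P ∂Q := by
  rw [← Measure.setLIntegral_rnDeriv hR, ← Measure.prod_restrict,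
    lintegral_prod_symm' _ (Measure.measurable_rnDeriv _ _)]

theorem ae_lintegral_rnDeriv_prod_eq_one (hR : R ≪ P.prod Q) (hQ : R.map Prod.snd = Q) :
    ∀ᵐ y ∂Q, ∫⁻ x, R.rnDeriv (P.prod Q) (x, y) ∂P = 1 := by
  refine ae_eq_of_forall_setLIntegral_eq_of_sigmaFinite
    (Measure.measurable_rnDeriv _ _).lintegral_prod_left' measurable_const fun B hB _ => ?_
  have hmarg : R (univ ×ˢ B) = Q B := by
    rw [← hQ, Measure.map_apply measurable_snd hB, univ_prod]
  rw [setLIntegral_const, one_mul, ← hmarg,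
    measure_prod_eq_lintegral_rnDeriv hR univ B]
  simp only [Measure.restrict_univ]

theorem measure_prod_eq_setLIntegral_rnDerivKernel (hR : R ≪ P.prod Q)
    (hQ : R.map Prod.snd = Q) {A : Set X} {B : Set Y} (hA : MeasurableSet A)
    (hB : MeasurableSet B) : R (A ×ˢ B) = ∫⁻ y in B, rnDerivKernel P Q R y A ∂Q := by
  rw [measure_prod_eq_lintegral_rnDeriv hR A B]
  refine setLIntegral_congr_fun_ae hB ?_
  filter_upwards [ae_lintegral_rnDeriv_prod_eq_one hR hQ] with y hy _
  rw [rnDerivKernel_apply_of_lintegral_eq_one hy, withDensity_apply _ hA]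

theorem isProdRCP_rnDerivKernel [IsProbabilityMeasure P] (hR : R ≪ P.prod Q)
    (hQ : R.map Prod.snd = Q) : IsProdRCP Q R (rnDerivKernel P Q R) :=
  ⟨fun _ => inferInstance, fun _ hA => Kernel.measurable_coe _ hA,
    fun _ _ hA hB => measure_prod_eq_setLIntegral_rnDerivKernel hR hQ hA hB⟩

end SigmaFinite

end

theorem stmt2_general {X Y : Type*} [MeasurableSpace X] [MeasurableSpace Y]
    (P : Measure X) (Q : Measure Y) (R : Measure (X × Y))
    [IsProbabilityMeasure P] [IsProbabilityMeasure Q] [IsProbabilityMeasure R]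
    (hQ : R.map Prod.snd = Q) :
    ((∃ S : Y → Measure X, IsProdRCP Q R S ∧ ∀ y, S y ≪ P) → R ≪ P.prod Q) ∧
    (R ≪ P.prod Q → (∃ S : Y → Measure X, IsProdRCP Q R S) →
      ∃ S' : Y → Measure X, IsProdRCP Q R S' ∧ ∀ y, S' y ≪ P) :=
  ⟨fun ⟨_, hS, hSP⟩ => hS.absolutelyContinuous_prod hSP,
    fun hR _ => ⟨_, isProdRCP_rnDerivKernel hR hQ, rnDerivKernel_absolutelyContinuous⟩⟩

theorem stmt2 {X Y : Type*} [MeasurableSpace X] [MeasurableSpace Y]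
    (P : Measure X) (Q : Measure Y) (R : Measure (X × Y))
    [IsProbabilityMeasure P] [IsProbabilityMeasure Q] [IsProbabilityMeasure R]
    (hP : R.map Prod.fst = P) (hQ : R.map Prod.snd = Q) :
    ((∃ S : Y → Measure X, IsProdRCP Q R S ∧ ∀ y, S y ≪ P) → R ≪ P.prod Q) ∧
    (R ≪ P.prod Q → (∃ S : Y → Measure X, IsProdRCP Q R S) →
      ∃ S' : Y → Measure X, IsProdRCP Q R S' ∧ ∀ y, S' y ≪ P) :=
  stmt2_general P Q R hQ
end

section
/- Let {S_y : y ∈ Y} be a product r.c.p. of R with respect to Q, and let ρ be a lifting on the complete probability space (Y,𝔅,Q). Suppose condition (IT) holds: whenever R(A×B) = 0 for A ∈ 𝔄, B ∈ 𝔅, either Q(B) = 0 or S_y(A) = 0 for all y ∈ ρ(B). Then S_y ≪ P for every y ∈ Y. -/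
open MeasureTheory Set

/-- A lifting on the probability space given by `Q`. -/
def IsLifting {Y : Type*} [MeasurableSpace Y] (Q : Measure Y) (ρ : Set Y → Set Y) : Prop :=
  (∀ B, MeasurableSet B → MeasurableSet (ρ B) ∧ Q (symmDiff B (ρ B)) = 0) ∧
  (∀ B B', MeasurableSet B → MeasurableSet B' → Q (symmDiff B B') = 0 → ρ B = ρ B') ∧
  ρ ∅ = ∅ ∧ ρ Set.univ = Set.univ ∧
  (∀ B B', MeasurableSet B → MeasurableSet B' → ρ (B ∩ B') = ρ B ∩ ρ B') ∧
  (∀ B, MeasurableSet B → ρ Bᶜ = (ρ B)ᶜ)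

theorem IsLifting.map_univ {Y : Type*} [MeasurableSpace Y] {Q : Measure Y} {ρ : Set Y → Set Y}
    (hρ : IsLifting Q ρ) : ρ univ = univ :=
  hρ.2.2.2.1

theorem stmt3_general {X Y : Type*} [MeasurableSpace X] [MeasurableSpace Y]
    (P : Measure X) (Q : Measure Y) (R : Measure (X × Y))
    [IsProbabilityMeasure Q]
    (hP : R.map Prod.fst = P)
    (S : Y → Measure X)
    (ρ : Set Y → Set Y) (hρ : IsLifting Q ρ)
    (hIT : ∀ (A : Set X) (B : Set Y), MeasurableSet A → MeasurableSet B →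
      R (A ×ˢ B) = 0 → Q B = 0 ∨ ∀ y ∈ ρ B, S y A = 0) :
    ∀ y, S y ≪ P := by
  intro y
  refine Measure.AbsolutelyContinuous.mk fun A hA hPA => ?_
  have hR : R (A ×ˢ univ) = 0 := by
    rwa [prod_univ, ← Measure.map_apply measurable_fst hA, hP]
  rcases hIT A univ hA .univ hR with hQ | hS
  · simp at hQ
  · exact hS y (by rw [hρ.map_univ]; exact mem_univ y)

theorem stmt3 {X Y : Type*} [MeasurableSpace X] [MeasurableSpace Y]
    (P : Measure X) (Q : Measure Y) (R : Measure (X × Y))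
    [IsProbabilityMeasure P] [IsProbabilityMeasure Q] [IsProbabilityMeasure R]
    [Q.IsComplete]
    (hP : R.map Prod.fst = P) (hQ : R.map Prod.snd = Q)
    (S : Y → Measure X) (hSprob : ∀ y, IsProbabilityMeasure (S y))
    (hSmeas : ∀ A : Set X, MeasurableSet A → Measurable fun y => S y A)
    (hSdis : ∀ (A : Set X) (B : Set Y), MeasurableSet A → MeasurableSet B →
      R (A ×ˢ B) = ∫⁻ y in B, S y A ∂Q)
    (ρ : Set Y → Set Y) (hρ : IsLifting Q ρ)
    (hIT : ∀ (A : Set X) (B : Set Y), MeasurableSet A → MeasurableSet B →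
      R (A ×ˢ B) = 0 → Q B = 0 ∨ ∀ y ∈ ρ B, S y A = 0) :
    ∀ y, S y ≪ P :=
  stmt3_general P Q R hP S ρ hρ hIT
end

section
/- Let {S_y : y ∈ Y} be a product r.c.p. of R with respect to Q, for each A ∈ 𝔄 let B_A := {y ∈ Y : S_y(A) > 0}, and let ρ be a lifting on (Y,𝔅,Q). Then the following are equivalent: (i) whenever R(A×B)=0, either Q(B)=0 or S_y(A)=0 for all y ∈ ρ(B) (condition (IT)); (ii) B_A ⊆ ρ(B_A) for every A ∈ 𝔄. -/
open MeasureTheory Set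

namespace IsLifting

variable {Y : Type*} [MeasurableSpace Y] {Q : Measure Y} {ρ : Set Y → Set Y} {B B' : Set Y}

theorem eq_empty_of_measure_zero (hρ : IsLifting Q ρ) (hB : MeasurableSet B) (h : Q B = 0) :
    ρ B = ∅ := by
  rw [← hρ.2.2.1]
  exact hρ.2.1 B ∅ hB .empty (by simpa [symmDiff] using h)

theorem inter (hρ : IsLifting Q ρ) (hB : MeasurableSet B) (hB' : MeasurableSet B') :
    ρ (B ∩ B') = ρ B ∩ ρ B' :=
  hρ.2.2.2.2.1 B B' hB hB'

theorem compl (hρ : IsLifting Q ρ) (hB : MeasurableSet B) : ρ Bᶜ = (ρ B)ᶜ :=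
  hρ.2.2.2.2.2 B hB

theorem forall_setLIntegral_eq_zero_iff_pos_subset {g : Y → ENNReal} (hρ : IsLifting Q ρ)
    (hg : Measurable g) :
    (∀ B, MeasurableSet B → ∫⁻ y in B, g y ∂Q = 0 → Q B = 0 ∨ ∀ y ∈ ρ B, g y = 0) ↔
      {y | 0 < g y} ⊆ ρ {y | 0 < g y} := by
  have hpos : MeasurableSet {y | 0 < g y} := measurableSet_lt measurable_const hg
  constructor
  · intro h
    have hzero : ∫⁻ y in {y | 0 < g y}ᶜ, g y ∂Q = 0 :=
      (setLIntegral_eq_zero_iff hpos.compl hg).2 <|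
        .of_forall fun y hy => nonpos_iff_eq_zero.1 (not_lt.1 hy)
    rcases h _ hpos.compl hzero with hnull | hvanish
    · have hfull : ρ {y | 0 < g y} = univ := compl_empty_iff.1 <|
        (hρ.compl hpos).symm.trans (hρ.eq_empty_of_measure_zero hpos.compl hnull)
      exact hfull ▸ subset_univ _
    · intro y hy
      by_contra hy'
      exact hy.ne' (hvanish y (by rwa [hρ.compl hpos]))
  · intro h B hB hint
    right
    have hnull : Q (B ∩ {y | 0 < g y}) = 0 := by
      have := ae_iff.1 ((setLIntegral_eq_zero_iff hB hg).1 hint)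
      simpa [pos_iff_ne_zero, inter_def] using this
    have hdisj := hρ.eq_empty_of_measure_zero (hB.inter hpos) hnull
    rw [hρ.inter hB hpos] at hdisj
    intro y hy
    by_contra hy'
    exact (eq_empty_iff_forall_notMem.1 hdisj) y ⟨hy, h (pos_iff_ne_zero.2 hy')⟩

end IsLifting

theorem stmt4_general {X Y : Type*} [MeasurableSpace X] [MeasurableSpace Y]
    (Q : Measure Y) (R : Measure (X × Y))
    (S : Y → Measure X)
    (hSmeas : ∀ A : Set X, MeasurableSet A → Measurable fun y => S y A)
    (hSdis : ∀ (A : Set X) (B : Set Y), MeasurableSet A → MeasurableSet B →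
      R (A ×ˢ B) = ∫⁻ y in B, S y A ∂Q)
    (ρ : Set Y → Set Y) (hρ : IsLifting Q ρ) :
    (∀ (A : Set X) (B : Set Y), MeasurableSet A → MeasurableSet B →
        R (A ×ˢ B) = 0 → Q B = 0 ∨ ∀ y ∈ ρ B, S y A = 0) ↔
    (∀ A : Set X, MeasurableSet A → {y : Y | 0 < S y A} ⊆ ρ {y : Y | 0 < S y A}) := by
  have key A (hA : MeasurableSet A) :=
    hρ.forall_setLIntegral_eq_zero_iff_pos_subset (hSmeas A hA)
  constructor
  · intro h A hA
    exact (key A hA).1 fun B hB hint => h A B hA hB ((hSdis A B hA hB).trans hint)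
  · intro h A B hA hB hR
    exact (key A hA).2 (h A hA) B hB ((hSdis A B hA hB).symm.trans hR)

theorem stmt4 {X Y : Type*} [MeasurableSpace X] [MeasurableSpace Y]
    (P : Measure X) (Q : Measure Y) (R : Measure (X × Y))
    [IsProbabilityMeasure P] [IsProbabilityMeasure Q] [IsProbabilityMeasure R]
    [Q.IsComplete]
    (hP : R.map Prod.fst = P) (hQ : R.map Prod.snd = Q)
    (S : Y → Measure X) (hSprob : ∀ y, IsProbabilityMeasure (S y))
    (hSmeas : ∀ A : Set X, MeasurableSet A → Measurable fun y => S y A)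
    (hSdis : ∀ (A : Set X) (B : Set Y), MeasurableSet A → MeasurableSet B →
      R (A ×ˢ B) = ∫⁻ y in B, S y A ∂Q)
    (ρ : Set Y → Set Y) (hρ : IsLifting Q ρ) :
    (∀ (A : Set X) (B : Set Y), MeasurableSet A → MeasurableSet B →
        R (A ×ˢ B) = 0 → Q B = 0 ∨ ∀ y ∈ ρ B, S y A = 0) ↔
    (∀ A : Set X, MeasurableSet A → {y : Y | 0 < S y A} ⊆ ρ {y : Y | 0 < S y A}) :=
  stmt4_general Q R S hSmeas hSdis ρ hρ
end

section
/- With X = Y = [0,1], R the normalized measure on the diagonal (R(E) = λ({t : (t,t) ∈ E})) and S_y = δ_y, the measure R is not absolutely continuous with respect to λ⊗λ; in particular R([0,1/2]×[1/2,1]) = 0 while δ_{1/2}([0,1/2]) = 1, so no rectangle formula of the form π(A×B) = ⋃_{y∈ρ(B)} σ_y(A)×{y} can hold for any lifting ρ of λ and liftings σ_y of δ_y. -/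
/-!
The diagonal measure `R = λ ∘ (t ↦ (t, t))⁻¹` charges the diagonal fully, whereas `λ ⊗ λ` gives it
mass zero because `λ` has no atoms, and `R (A × B) = λ (A ∩ B)`. To refute the rectangle formula for
every choice of liftings, take `A = {y}` and `B = univ`: `R ({y} × univ) = 0` forces
`π ({y} × univ) = ∅`, while `ρ univ = univ` and `σ_y {y} = univ` (as `δ_y` is carried by `{y}`)
put `(y, y)` on the right-hand side.
-/

open MeasureTheory Set

/-- A lifting on the completion of the probability space given by `μ`
(acting on all `μ`-null-measurable sets). -/
def IsLiftingNM {α : Type*} [MeasurableSpace α] (μ : Measure α) (τ : Set α → Set α) : Prop :=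
  (∀ E, NullMeasurableSet E μ → NullMeasurableSet (τ E) μ ∧ μ (symmDiff E (τ E)) = 0) ∧
  (∀ E F, NullMeasurableSet E μ → NullMeasurableSet F μ → μ (symmDiff E F) = 0 → τ E = τ F) ∧
  τ ∅ = ∅ ∧ τ Set.univ = Set.univ ∧
  (∀ E F, NullMeasurableSet E μ → NullMeasurableSet F μ → τ (E ∩ F) = τ E ∩ τ F) ∧
  (∀ E, NullMeasurableSet E μ → τ Eᶜ = (τ E)ᶜ)

namespace MeasureTheory.Measure

variable {α : Type*} [MeasurableSpace α]

lemma map_diag_apply_prod (μ : Measure α) {A B : Set α} (hA : MeasurableSet A)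
    (hB : MeasurableSet B) : μ.map (fun t => (t, t)) (A ×ˢ B) = μ (A ∩ B) := by
  rw [map_apply (by fun_prop) (hA.prod hB), mk_preimage_prod]
  rfl

lemma map_diag_apply_diagonal [MeasurableEq α] (μ : Measure α) :
    μ.map (fun t => (t, t)) (diagonal α) = μ univ := by
  rw [map_apply (by fun_prop) measurableSet_diagonal]
  congr 1
  exact eq_univ_of_forall fun _ => rfl

lemma prod_apply_diagonal [MeasurableEq α] (μ ν : Measure α) [SFinite ν]
    [NullSingletonClass ν] : μ.prod ν (diagonal α) = 0 := by
  rw [prod_apply measurableSet_diagonal]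
  have hslice : ∀ x : α, Prod.mk x ⁻¹' diagonal α = {x} := fun x => by
    ext y; simp [eq_comm]
  simp [hslice]

lemma not_map_diag_absolutelyContinuous_prod [MeasurableEq α] {μ : Measure α} (hμ : μ ≠ 0)
    (ν ν' : Measure α) [SFinite ν'] [NullSingletonClass ν'] :
    ¬ μ.map (fun t => (t, t)) ≪ ν.prod ν' := by
  intro h
  have hdiag := h (prod_apply_diagonal ν ν')
  rw [map_diag_apply_diagonal, measure_univ_eq_zero] at hdiag
  exact hμ hdiag

end MeasureTheory.Measure

section Lifting

variable {α : Type*} [MeasurableSpace α] {μ : Measure α} {τ : Set α → Set α}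

lemma IsLiftingNM.eq_empty_of_measure_eq_zero (hτ : IsLiftingNM μ τ) {E : Set α}
    (hE : μ E = 0) : τ E = ∅ := by
  rw [hτ.2.1 E ∅ (.of_null hE) .empty (by simpa using hE), hτ.2.2.1]

lemma IsLiftingNM.eq_univ_of_measure_compl_eq_zero (hτ : IsLiftingNM μ τ) {E : Set α}
    (hE : μ Eᶜ = 0) : τ E = univ := by
  rw [← compl_compl E, hτ.2.2.2.2.2 Eᶜ (.of_null hE), hτ.eq_empty_of_measure_eq_zero hE,
    compl_empty]

lemma IsLiftingNM.dirac_singleton [MeasurableSingletonClass α] {y : α}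
    (hτ : IsLiftingNM (Measure.dirac y) τ) : τ {y} = univ :=
  hτ.eq_univ_of_measure_compl_eq_zero (by simp)

theorem not_forall_lifting_prod_eq [MeasurableSingletonClass α] [Nonempty α]
    [NullSingletonClass μ] (ν : Measure α) {ρ : Set α → Set α} {π : Set (α × α) → Set (α × α)}
    {σ : α → Set α → Set α} (hρ : IsLifting ν ρ)
    (hπ : IsLiftingNM (μ.map fun t => (t, t)) π)
    (hσ : ∀ y, IsLiftingNM (Measure.dirac y) (σ y)) :
    ¬ ∀ A B : Set α, MeasurableSet A → MeasurableSet B →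
        π (A ×ˢ B) = {p : α × α | p.2 ∈ ρ B ∧ p.1 ∈ σ p.2 A} := by
  intro h
  obtain ⟨y⟩ := ‹Nonempty α›
  have hπ_empty : π ({y} ×ˢ univ) = ∅ := hπ.eq_empty_of_measure_eq_zero <| by
    rw [Measure.map_diag_apply_prod μ (measurableSet_singleton y) .univ, inter_univ,
      measure_singleton]
  have hmem : (y, y) ∈ π ({y} ×ˢ univ) := by
    simp [h _ _ (measurableSet_singleton y) .univ, hρ.2.2.2.1, (hσ y).dirac_singleton]
  simp [hπ_empty] at hmem

end Lifting

theorem stmt11 :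
    let lam : Measure ℝ := volume.restrict (Set.Icc 0 1)
    let R : Measure (ℝ × ℝ) := lam.map (fun t => (t, t))
    ¬ R ≪ lam.prod lam ∧
    R (Set.Icc 0 (1/2) ×ˢ Set.Icc (1/2) 1) = 0 ∧
    Measure.dirac (1/2 : ℝ) (Set.Icc 0 (1/2)) = 1 ∧
    ∀ (ρ : Set ℝ → Set ℝ) (π : Set (ℝ × ℝ) → Set (ℝ × ℝ)) (σ : ℝ → Set ℝ → Set ℝ),
      IsLifting lam ρ → IsLiftingNM R π → (∀ y, IsLiftingNM (Measure.dirac y) (σ y)) →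
      ¬ (∀ (A B : Set ℝ), MeasurableSet A → MeasurableSet B →
          π (A ×ˢ B) = {p : ℝ × ℝ | p.2 ∈ ρ B ∧ p.1 ∈ σ p.2 A}) := by
  intro lam R
  have hlam : lam ≠ 0 := by
    rw [← Measure.measure_univ_pos, Measure.restrict_apply_univ, Real.volume_Icc]
    norm_num
  refine ⟨Measure.not_map_diag_absolutelyContinuous_prod hlam lam lam, ?_, ?_,
    fun ρ π σ hρ hπ hσ => not_forall_lifting_prod_eq lam hρ hπ hσ⟩
  · rw [Measure.map_diag_apply_prod lam measurableSet_Icc measurableSet_Icc,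
      Icc_inter_Icc_eq_singleton (by norm_num) (by norm_num), measure_singleton]
  · exact Measure.dirac_apply_of_mem (by norm_num)
end

section
/- Let C ⊆ [0,1] with λ(C) > 0, Q the standard Gaussian measure on ℝ, S_y as in the previous item (Gaussian conditioned to avoid C + y), R the measure on ℝ² determined by R(A×B) = ∫_B S_y(A) dQ(y), and P(A) := R(A×ℝ). Let H := {(x,y) : x − y ∈ C}. Then R(H) = 0 but (P⊗Q)(H) > 0; consequently P⊗Q is not absolutely continuous with respect to R. -/
/-! Finite measures agreeing on rectangles coincide, so `R` has a density with respect to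
Lebesgue ⊗ Gaussian; this density is a function of `x - y` vanishing on `C`, hence the set
`H = {x - y ∈ C}` is `R`-null. On the other hand every section `x - C` of `H` has positive
Lebesgue, hence positive Gaussian, measure, so `H` is not `P ⊗ Q`-null. -/

open MeasureTheory Set ProbabilityTheory

open scoped ENNReal NNReal

namespace MeasureTheory.Measure

variable {α β : Type*} [MeasurableSpace α] [MeasurableSpace β] {μ : Measure α} {ν : Measure β}

lemma withDensity_prod_apply_prod [SFinite μ] [SFinite ν] {f : α × β → ℝ≥0∞}
    (hf : Measurable f) {s : Set α} {t : Set β} (hs : MeasurableSet s) (ht : MeasurableSet t) :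
    (μ.prod ν).withDensity f (s ×ˢ t) = ∫⁻ y in t, μ.withDensity (fun x => f (x, y)) s ∂ν := by
  rw [withDensity_apply _ (hs.prod ht), ← prod_restrict,
    lintegral_prod_symm _ hf.aemeasurable]
  exact setLIntegral_congr_fun ht fun y _ => (withDensity_apply _ hs).symm

lemma prod_apply_pos_of_forall_pos [SFinite ν] (hμ : μ ≠ 0) {s : Set (α × β)}
    (hs : MeasurableSet s) (h : ∀ x, 0 < ν (Prod.mk x ⁻¹' s)) : 0 < μ.prod ν s := by
  refine pos_iff_ne_zero.2 fun h0 => hμ ?_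
  rw [← ae_eq_bot, ← Filter.eventually_false_iff_eq_bot]
  filter_upwards [(measure_prod_null hs).1 h0] with x hx
  exact (h x).ne' hx

end MeasureTheory.Measure

lemma ProbabilityTheory.gaussianReal_pos_of_volume_pos (m : ℝ) {v : ℝ≥0} (hv : v ≠ 0)
    {s : Set ℝ} (hs : 0 < volume s) : 0 < gaussianReal m v s :=
  pos_iff_ne_zero.2 fun h => hs.ne' (gaussianReal_absolutelyContinuous' m hv h)

theorem stmt13_general (C : Set ℝ) (hC : MeasurableSet C)
    (hCpos : 0 < volume C)
    (S : ℝ → Measure ℝ)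
    (hS : ∀ y, S y = (∫⁻ t in Cᶜ, ENNReal.ofReal (Real.exp (-t ^ 2 / 2)))⁻¹ •
      ((volume.restrict {t : ℝ | t - y ∉ C}).withDensity
        fun t => ENNReal.ofReal (Real.exp (-(t - y) ^ 2 / 2))))
    (R : Measure (ℝ × ℝ)) [IsProbabilityMeasure R]
    (hR : ∀ (A B : Set ℝ), MeasurableSet A → MeasurableSet B →
      R (A ×ˢ B) = ∫⁻ y in B, S y A ∂(ProbabilityTheory.gaussianReal 0 1))
    (P : Measure ℝ) (hP : P = R.map Prod.fst) :
    R {p : ℝ × ℝ | p.1 - p.2 ∈ C} = 0 ∧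
    0 < (P.prod (ProbabilityTheory.gaussianReal 0 1)) {p : ℝ × ℝ | p.1 - p.2 ∈ C} ∧
    ¬ (P.prod (ProbabilityTheory.gaussianReal 0 1)) ≪ R := by
  set h : ℝ → ℝ≥0∞ := fun t => (∫⁻ t in Cᶜ, ENNReal.ofReal (Real.exp (-t ^ 2 / 2)))⁻¹ *
    Cᶜ.indicator (fun t => ENNReal.ofReal (Real.exp (-t ^ 2 / 2))) t
  have hh : Measurable h := by
    refine Measurable.const_mul (Measurable.indicator ?_ hC.compl) _
    fun_prop
  have hH : MeasurableSet {p : ℝ × ℝ | p.1 - p.2 ∈ C} := hC.preimage (by fun_prop)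
  have hS_eq : ∀ y, S y = volume.withDensity fun x => h (x - y) := by
    intro y
    have hD : MeasurableSet {t : ℝ | t - y ∉ C} := hC.compl.preimage (measurable_sub_const y)
    rw [hS, ← withDensity_indicator hD, ← withDensity_smul _ (by fun_prop)]
    rfl
  have hR_eq : R = (volume.prod (gaussianReal 0 1)).withDensity fun p => h (p.1 - p.2) :=
    Measure.ext_prod fun hA hB => by
      rw [hR _ _ hA hB, Measure.withDensity_prod_apply_prod (by fun_prop) hA hB]
      simp_rw [hS_eq]
  have hRH : R {p : ℝ × ℝ | p.1 - p.2 ∈ C} = 0 := by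
    rw [hR_eq, withDensity_apply_eq_zero (by fun_prop)]
    convert measure_empty (μ := volume.prod (gaussianReal 0 1))
    exact eq_empty_of_forall_notMem fun p ⟨hp, hpC⟩ => hp (by simp [h, show p.1 - p.2 ∈ C from hpC])
  have hPQ : 0 < (P.prod (gaussianReal 0 1)) {p : ℝ × ℝ | p.1 - p.2 ∈ C} := by
    have : IsProbabilityMeasure P :=
      hP ▸ Measure.isProbabilityMeasure_map measurable_fst.aemeasurable
    refine Measure.prod_apply_pos_of_forall_pos (IsProbabilityMeasure.ne_zero P) hH fun x => ?_
    refine gaussianReal_pos_of_volume_pos 0 one_ne_zero ?_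
    change 0 < volume ((x - ·) ⁻¹' C)
    rwa [(Measure.measurePreserving_sub_left volume x).measure_preimage hC.nullMeasurableSet]
  exact ⟨hRH, hPQ, fun hac => hPQ.ne' (hac hRH)⟩

theorem stmt13 (C : Set ℝ) (hC : MeasurableSet C) (hC1 : C ⊆ Set.Icc 0 1)
    (hCpos : 0 < volume C)
    (S : ℝ → Measure ℝ)
    (hS : ∀ y, S y = (∫⁻ t in Cᶜ, ENNReal.ofReal (Real.exp (-t ^ 2 / 2)))⁻¹ •
      ((volume.restrict {t : ℝ | t - y ∉ C}).withDensity
        fun t => ENNReal.ofReal (Real.exp (-(t - y) ^ 2 / 2))))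
    (R : Measure (ℝ × ℝ)) [IsProbabilityMeasure R]
    (hR : ∀ (A B : Set ℝ), MeasurableSet A → MeasurableSet B →
      R (A ×ˢ B) = ∫⁻ y in B, S y A ∂(ProbabilityTheory.gaussianReal 0 1))
    (P : Measure ℝ) (hP : P = R.map Prod.fst) :
    R {p : ℝ × ℝ | p.1 - p.2 ∈ C} = 0 ∧
    0 < (P.prod (ProbabilityTheory.gaussianReal 0 1)) {p : ℝ × ℝ | p.1 - p.2 ∈ C} ∧
    ¬ (P.prod (ProbabilityTheory.gaussianReal 0 1)) ≪ R :=
  stmt13_general C hC hCpos S hS R hR P hP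
end

section
/- Let (Y,𝔅,Q) be a complete probability space with lifting ρ, let N ∈ 𝔅 with Q(N) = 0, and fix y₀ ∈ N^c. Define ρ'(B) := (ρ(B) ∩ N^c) ∪ N if y₀ ∈ ρ(B), and ρ'(B) := ρ(B) ∩ N^c otherwise. Then ρ' is a lifting on (Y,𝔅,Q). -/
open MeasureTheory Set
open scoped Classical

/-! Setting `f y := y₀` on `N` and `f y := y` off `N`, the modified lifting is `B ↦ f ⁻¹' ρ B`.
Preimages preserve the Boolean operations, and since `f = id` off the null set `N`, the set
`f ⁻¹' ρ B` still differs from `B` only by a null set. -/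

theorem IsLifting.preimage {Y : Type*} [MeasurableSpace Y] {Q : Measure Y}
    {ρ : Set Y → Set Y} (hρ : IsLifting Q ρ) {f : Y → Y} (hf : Measurable f)
    (hfQ : f =ᵐ[Q] id) : IsLifting Q (fun B => f ⁻¹' ρ B) := by
  obtain ⟨hρ_ae, hρ_congr, hρ_empty, hρ_univ, hρ_inter, hρ_compl⟩ := hρ
  refine ⟨fun B hB => ?_, fun B B' hB hB' hBB' => ?_, ?_, ?_, fun B B' hB hB' => ?_,
    fun B hB => ?_⟩
  · obtain ⟨hρB, hBρB⟩ := hρ_ae B hB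
    have hpre : f ⁻¹' ρ B =ᵐ[Q] ρ B := by
      filter_upwards [hfQ] with y hy
      change (f y ∈ ρ B) = (y ∈ ρ B)
      rw [hy, id]
    refine ⟨hf hρB, measure_symmDiff_eq_zero_iff.mpr ?_⟩
    exact (measure_symmDiff_eq_zero_iff.mp hBρB).trans hpre.symm
  · simp only [hρ_congr B B' hB hB' hBB']
  · simp only [hρ_empty, preimage_empty]
  · simp only [hρ_univ, preimage_univ]
  · simp only [hρ_inter B B' hB hB', preimage_inter]
  · simp only [hρ_compl B hB, preimage_compl]

theorem preimage_piecewise_const_id {Y : Type*} (N S : Set Y) (y₀ : Y) :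
    N.piecewise (fun _ => y₀) id ⁻¹' S = if y₀ ∈ S then (S ∩ Nᶜ) ∪ N else S ∩ Nᶜ := by
  ext y
  by_cases hy : y ∈ N <;> split_ifs <;> simp_all [Set.piecewise]

theorem piecewise_const_id_ae_eq_id {Y : Type*} [MeasurableSpace Y] {Q : Measure Y}
    {N : Set Y} (hN0 : Q N = 0) (y₀ : Y) : N.piecewise (fun _ => y₀) id =ᵐ[Q] id := by
  filter_upwards [measure_eq_zero_iff_ae_notMem.mp hN0] with y hy
  simp [hy]

theorem stmt14_general {Y : Type*} [MeasurableSpace Y] (Q : Measure Y)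
    (ρ : Set Y → Set Y) (hρ : IsLifting Q ρ)
    (N : Set Y) (hN : MeasurableSet N) (hN0 : Q N = 0)
    (y₀ : Y) :
    IsLifting Q (fun B => if y₀ ∈ ρ B then (ρ B ∩ Nᶜ) ∪ N else ρ B ∩ Nᶜ) := by
  have hf : Measurable (N.piecewise (fun _ => y₀) id) :=
    Measurable.piecewise hN measurable_const measurable_id
  simpa only [preimage_piecewise_const_id] using
    hρ.preimage hf (piecewise_const_id_ae_eq_id hN0 y₀)

theorem stmt14 {Y : Type*} [MeasurableSpace Y] (Q : Measure Y)
    [IsProbabilityMeasure Q] [Q.IsComplete]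
    (ρ : Set Y → Set Y) (hρ : IsLifting Q ρ)
    (N : Set Y) (hN : MeasurableSet N) (hN0 : Q N = 0)
    (y₀ : Y) (hy₀ : y₀ ∈ Nᶜ) :
    IsLifting Q (fun B => if y₀ ∈ ρ B then (ρ B ∩ Nᶜ) ∪ N else ρ B ∩ Nᶜ) :=
  stmt14_general Q ρ hρ N hN hN0 y₀
end

section
/- Let {S_y : y ∈ Y} be a product r.c.p. of R with respect to Q such that S_y ≪ P for all y, let f be a Radon–Nikodym derivative of R with respect to P⊗Q, and let E_R := {f > 0}. Then R(E_R) = 1, and the set N := {y ∈ Y : S_y(E_R^y) < 1} is contained in a Q-null set; moreover, for every y ∉ N, the section E_R^y is a measurable support of S_y: S_y(E_R^y) = 1 and every A ∈ 𝔄 with P(A ∩ E_R^y) = 0 satisfies S_y(A) = 0. -/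
/-!
A measure with density `f` is carried by `{f > 0}`, so `R(E_Rᶜ) = 0`. A product r.c.p. is a
Markov kernel `κ` with `R ∘ swap⁻¹ = Q ⊗ κ`, hence `0 = R(E_Rᶜ) = ∫ S_y((E_R^y)ᶜ) dQ(y)` and
`S_y` is carried by `E_R^y` for `Q`-a.e. `y`. For such `y`, absolute continuity `S_y ≪ P`
makes every `A` with `P(A ∩ E_R^y) = 0` an `S_y`-null set.
-/

open MeasureTheory ProbabilityTheory Set
open scoped ENNReal

theorem MeasureTheory.ae_withDensity_pos {α : Type*} [MeasurableSpace α] {μ : Measure α}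
    {f : α → ℝ≥0∞} (hf : Measurable f) : ∀ᵐ x ∂μ.withDensity f, 0 < f x :=
  (ae_withDensity_iff hf).2 <| ae_of_all _ fun _ => pos_iff_ne_zero.2

theorem MeasureTheory.Measure.AbsolutelyContinuous.measure_eq_zero_of_measure_inter_eq_zero
    {α : Type*} [MeasurableSpace α] {μ ν : Measure α} {s t : Set α} (hμν : μ ≪ ν)
    (ht : μ tᶜ = 0) (hst : ν (s ∩ t) = 0) : μ s = 0 := by
  rw [← measure_inter_conull ht]
  exact hμν hst

section Disintegration

variable {X Y : Type*} [MeasurableSpace X] [MeasurableSpace Y] {R : Measure (X × Y)}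
  {Q : Measure Y} {κ : Kernel Y X}

theorem map_swap_eq_compProd_of_measure_prod [IsFiniteMeasure R] [SFinite Q] [IsSFiniteKernel κ]
    (hR : ∀ A B, MeasurableSet A → MeasurableSet B → R (A ×ˢ B) = ∫⁻ y in B, κ y A ∂Q) :
    R.map Prod.swap = Q ⊗ₘ κ := by
  have hrect : ∀ B A, MeasurableSet B → MeasurableSet A →
      R.map Prod.swap (B ×ˢ A) = (Q ⊗ₘ κ) (B ×ˢ A) := fun B A hB hA => by
    rw [Measure.map_apply measurable_swap (hB.prod hA), preimage_swap_prod, hR A B hA hB,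
      Measure.compProd_apply_prod hB hA]
  refine ext_of_generate_finite _ generateFrom_prod.symm isPiSystem_prod ?_ ?_
  · rintro _ ⟨B, hB, A, hA, rfl⟩
    exact hrect B A hB hA
  · rw [← univ_prod_univ]
    exact hrect _ _ .univ .univ

theorem measure_eq_lintegral_kernel_section [IsFiniteMeasure R] [SFinite Q] [IsSFiniteKernel κ]
    (hR : ∀ A B, MeasurableSet A → MeasurableSet B → R (A ×ˢ B) = ∫⁻ y in B, κ y A ∂Q)
    {E : Set (X × Y)} (hE : MeasurableSet E) :
    R E = ∫⁻ y, κ y {x | (x, y) ∈ E} ∂Q := by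
  have hE' : MeasurableSet (Prod.swap ⁻¹' E) := measurable_swap hE
  calc R E = R.map Prod.swap (Prod.swap ⁻¹' E) := by
        rw [Measure.map_apply measurable_swap hE', ← preimage_comp, Prod.swap_swap_eq, preimage_id]
    _ = ∫⁻ y, κ y {x | (x, y) ∈ E} ∂Q := by
        rw [map_swap_eq_compProd_of_measure_prod hR, Measure.compProd_apply hE']
        rfl

theorem ae_kernel_section_eq_zero [IsFiniteMeasure R] [SFinite Q] [IsSFiniteKernel κ]
    (hR : ∀ A B, MeasurableSet A → MeasurableSet B → R (A ×ˢ B) = ∫⁻ y in B, κ y A ∂Q)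
    {E : Set (X × Y)} (hE : MeasurableSet E) (hRE : R E = 0) :
    ∀ᵐ y ∂Q, κ y {x | (x, y) ∈ E} = 0 := by
  rw [measure_eq_lintegral_kernel_section hR hE] at hRE
  exact (lintegral_eq_zero_iff (Kernel.measurable_kernel_prodMk_left (measurable_swap hE))).1 hRE

end Disintegration

theorem stmt15_general {X Y : Type*} [MeasurableSpace X] [MeasurableSpace Y]
    (P : Measure X) (Q : Measure Y) (R : Measure (X × Y))
    [IsProbabilityMeasure Q] [IsProbabilityMeasure R]
    (S : Y → Measure X) (hSprob : ∀ y, IsProbabilityMeasure (S y))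
    (hSmeas : ∀ A : Set X, MeasurableSet A → Measurable fun y => S y A)
    (hSdis : ∀ (A : Set X) (B : Set Y), MeasurableSet A → MeasurableSet B →
      R (A ×ˢ B) = ∫⁻ y in B, S y A ∂Q)
    (hSac : ∀ y, S y ≪ P)
    (f : X × Y → ℝ≥0∞) (hf : Measurable f) (hRN : R = (P.prod Q).withDensity f) :
    R {p : X × Y | 0 < f p} = 1 ∧
    (∃ N' : Set Y, MeasurableSet N' ∧ Q N' = 0 ∧
      {y : Y | S y {x : X | 0 < f (x, y)} < 1} ⊆ N') ∧
    (∀ y : Y, S y {x : X | 0 < f (x, y)} = 1 →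
      S y {x : X | 0 < f (x, y)} = 1 ∧
        ∀ A : Set X, MeasurableSet A → P (A ∩ {x : X | 0 < f (x, y)}) = 0 → S y A = 0) := by
  set E := {p : X × Y | 0 < f p}
  have hE : MeasurableSet E := measurableSet_lt measurable_const hf
  have hEy (y : Y) : MeasurableSet {x | (x, y) ∈ E} := measurable_prodMk_right hE
  have hRE : R Eᶜ = 0 := hRN ▸ ae_withDensity_pos hf
  let κ : Kernel Y X := ⟨S, Measure.measurable_of_measurable_coe S hSmeas⟩
  have : IsMarkovKernel κ := ⟨hSprob⟩
  have hSE : ∀ᵐ y ∂Q, S y {x | (x, y) ∈ E}ᶜ = 0 :=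
    ae_kernel_section_eq_zero (κ := κ) hSdis hE.compl hRE
  refine ⟨(prob_compl_eq_zero_iff hE).1 hRE, ?_, fun y hy => ⟨hy, fun A _ hPA => ?_⟩⟩
  · obtain ⟨N', hNsub, hN, hQN⟩ := exists_measurable_superset_of_null (ae_iff.1 hSE)
    refine ⟨N', hN, hQN, fun y hy => hNsub fun hy0 => ?_⟩
    exact hy.ne ((prob_compl_eq_zero_iff (hEy y)).1 hy0)
  · exact (hSac y).measure_eq_zero_of_measure_inter_eq_zero
      ((prob_compl_eq_zero_iff (hEy y)).2 hy) hPA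

theorem stmt15 {X Y : Type*} [MeasurableSpace X] [MeasurableSpace Y]
    (P : Measure X) (Q : Measure Y) (R : Measure (X × Y))
    [IsProbabilityMeasure P] [IsProbabilityMeasure Q] [IsProbabilityMeasure R]
    (hP : R.map Prod.fst = P) (hQ : R.map Prod.snd = Q)
    (S : Y → Measure X) (hSprob : ∀ y, IsProbabilityMeasure (S y))
    (hSmeas : ∀ A : Set X, MeasurableSet A → Measurable fun y => S y A)
    (hSdis : ∀ (A : Set X) (B : Set Y), MeasurableSet A → MeasurableSet B →
      R (A ×ˢ B) = ∫⁻ y in B, S y A ∂Q)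
    (hSac : ∀ y, S y ≪ P)
    (f : X × Y → ℝ≥0∞) (hf : Measurable f) (hRN : R = (P.prod Q).withDensity f) :
    R {p : X × Y | 0 < f p} = 1 ∧
    (∃ N' : Set Y, MeasurableSet N' ∧ Q N' = 0 ∧
      {y : Y | S y {x : X | 0 < f (x, y)} < 1} ⊆ N') ∧
    (∀ y : Y, S y {x : X | 0 < f (x, y)} = 1 →
      S y {x : X | 0 < f (x, y)} = 1 ∧
        ∀ A : Set X, MeasurableSet A → P (A ∩ {x : X | 0 < f (x, y)}) = 0 → S y A = 0) :=
  stmt15_general P Q R S hSprob hSmeas hSdis hSac f hf hRN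
end

section
/- Let {S_y : y ∈ Y} be a product r.c.p. of R with respect to Q and ρ a lifting on (Y,𝔅,Q). Suppose there exist a lifting π on the completion of (X×Y, 𝔄⊗𝔅, R) and liftings σ_y on the completions (X, 𝔄̂_y, Ŝ_y) such that the rectangle formula π(A×B) = ⋃_{y∈ρ(B)} σ_y(A)×{y} holds for all A ∈ 𝔄, B ∈ 𝔅. Then condition (IT) holds: R(A×B) = 0 implies Q(B) = 0 or S_y(A) = 0 for all y ∈ ρ(B). -/
open MeasureTheory Set

theorem IsLiftingNM.apply_eq_empty_iff {α : Type*} [MeasurableSpace α] {μ : Measure α}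
    {τ : Set α → Set α} (hτ : IsLiftingNM μ τ) {E : Set α} (hE : NullMeasurableSet E μ) :
    τ E = ∅ ↔ μ E = 0 := by
  obtain ⟨hsymm, hcongr, hempty, -⟩ := hτ
  constructor
  · intro h
    simpa [h] using (hsymm E hE).2
  · intro h
    rw [← hempty]
    exact hcongr E ∅ hE nullMeasurableSet_empty (by simpa using h)

theorem stmt17_general {X Y : Type*} [MeasurableSpace X] [MeasurableSpace Y]
    (Q : Measure Y) (R : Measure (X × Y))
    (S : Y → Measure X)
    (ρ : Set Y → Set Y)
    (π : Set (X × Y) → Set (X × Y)) (hπ : IsLiftingNM R π)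
    (σ : Y → Set X → Set X) (hσ : ∀ y, IsLiftingNM (S y) (σ y))
    (hRF : ∀ (A : Set X) (B : Set Y), MeasurableSet A → MeasurableSet B →
      π (A ×ˢ B) = {p : X × Y | p.2 ∈ ρ B ∧ p.1 ∈ σ p.2 A}) :
    ∀ (A : Set X) (B : Set Y), MeasurableSet A → MeasurableSet B →
      R (A ×ˢ B) = 0 → Q B = 0 ∨ ∀ y ∈ ρ B, S y A = 0 := by
  intro A B hA hB hR0
  refine Or.inr fun y hy => ?_
  have hπ0 : π (A ×ˢ B) = ∅ :=
    (hπ.apply_eq_empty_iff (hA.prod hB).nullMeasurableSet).2 hR0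
  have hσ0 : σ y A = ∅ := by
    refine eq_empty_of_forall_notMem fun x hx => ?_
    have hxy : (x, y) ∈ π (A ×ˢ B) := by
      rw [hRF A B hA hB]
      exact ⟨hy, hx⟩
    simp [hπ0] at hxy
  exact ((hσ y).apply_eq_empty_iff hA.nullMeasurableSet).1 hσ0

theorem stmt17 {X Y : Type*} [MeasurableSpace X] [MeasurableSpace Y]
    (P : Measure X) (Q : Measure Y) (R : Measure (X × Y))
    [IsProbabilityMeasure P] [IsProbabilityMeasure Q] [IsProbabilityMeasure R]
    [Q.IsComplete]
    (hP : R.map Prod.fst = P) (hQ : R.map Prod.snd = Q)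
    (S : Y → Measure X) (hSprob : ∀ y, IsProbabilityMeasure (S y))
    (hSmeas : ∀ A : Set X, MeasurableSet A → Measurable fun y => S y A)
    (hSdis : ∀ (A : Set X) (B : Set Y), MeasurableSet A → MeasurableSet B →
      R (A ×ˢ B) = ∫⁻ y in B, S y A ∂Q)
    (ρ : Set Y → Set Y) (hρ : IsLifting Q ρ)
    (π : Set (X × Y) → Set (X × Y)) (hπ : IsLiftingNM R π)
    (σ : Y → Set X → Set X) (hσ : ∀ y, IsLiftingNM (S y) (σ y))
    (hRF : ∀ (A : Set X) (B : Set Y), MeasurableSet A → MeasurableSet B →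
      π (A ×ˢ B) = {p : X × Y | p.2 ∈ ρ B ∧ p.1 ∈ σ p.2 A}) :
    ∀ (A : Set X) (B : Set Y), MeasurableSet A → MeasurableSet B →
      R (A ×ˢ B) = 0 → Q B = 0 ∨ ∀ y ∈ ρ B, S y A = 0 :=
  stmt17_general Q R S ρ π hπ σ hσ hRF
end

section
/- Let ℭ be a finite algebra of subsets of X and H ∈ 𝔄 ∖ ℭ with H contained in an atom A_H of ℭ, and let 𝔇 = σ(ℭ ∪ {H}). Let S be a probability measure on 𝔄 and τ a lifting on (X, ℭ, S|ℭ). Define ξ(H) := ∅ if S(H) = 0, ξ(H) := τ(A_H) if S(A_H ∖ H) = 0, and ξ(H) := H otherwise; define ξ(H^c) := (τ(A_H) ∖ ξ(H)) ∪ τ(A_H^c); and for D = (A ∩ H) ∪ (B ∩ H^c) with A, B ∈ ℭ define ξ(D) := (ξ(H) ∩ τ(A)) ∪ (ξ(H^c) ∩ τ(B)). Then ξ is a well-defined lifting on (X, 𝔇, S|𝔇) extending τ. -/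
open MeasureTheory Set
open scoped Classical

/-- A lifting on the probability space `(X, m, S|m)`, where `m` is a (sub-)σ-algebra. -/
def IsLiftingOn {α : Type*} {m₀ : MeasurableSpace α} (m : MeasurableSpace α)
    (S : @MeasureTheory.Measure α m₀) (τ : Set α → Set α) : Prop :=
  (∀ C, MeasurableSet[m] C → MeasurableSet[m] (τ C) ∧ S (symmDiff C (τ C)) = 0) ∧
  (∀ C C', MeasurableSet[m] C → MeasurableSet[m] C' → S (symmDiff C C') = 0 → τ C = τ C') ∧
  τ ∅ = ∅ ∧ τ Set.univ = Set.univ ∧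
  (∀ C C', MeasurableSet[m] C → MeasurableSet[m] C' → τ (C ∩ C') = τ C ∩ τ C') ∧
  (∀ C, MeasurableSet[m] C → τ Cᶜ = (τ C)ᶜ)

theorem stmt19 {X : Type*} [mX : MeasurableSpace X]
    (S : Measure X) [IsProbabilityMeasure S]
    (m : MeasurableSpace X) (hm : m ≤ mX)
    (hfin : {s : Set X | MeasurableSet[m] s}.Finite)
    (H : Set X) (hH : MeasurableSet[mX] H) (hHm : ¬ MeasurableSet[m] H)
    (AH : Set X) (hAH : MeasurableSet[m] AH) (hAHne : AH.Nonempty) (hHAH : H ⊆ AH)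
    (hatom : ∀ C, MeasurableSet[m] C → C ⊆ AH → C = ∅ ∨ C = AH)
    (τ : Set X → Set X) (hτ : IsLiftingOn m S τ) :
    ∃ ξ : Set X → Set X,
      IsLiftingOn (m ⊔ MeasurableSpace.generateFrom {H}) S ξ ∧
      (∀ C, MeasurableSet[m] C → ξ C = τ C) ∧
      ξ H = (if S H = 0 then ∅ else if S (AH \ H) = 0 then τ AH else H) ∧
      ξ (AH \ H) = (if S H = 0 then τ AH else if S (AH \ H) = 0 then ∅ else τ AH \ H) ∧
      ξ Hᶜ = ξ (AH \ H) ∪ τ AHᶜ ∧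
      (∀ A B : Set X, MeasurableSet[m] A → MeasurableSet[m] B →
        ξ ((A ∩ H) ∪ (B ∩ Hᶜ)) = (ξ H ∩ τ A) ∪ (ξ Hᶜ ∩ τ B)) := by
  classical
  obtain ⟨hτ1, hτ2, hτ3, hτ4, hτ5, hτ6⟩ := hτ
  set m' := m ⊔ MeasurableSpace.generateFrom {H} with hm'def
  have hle : m ≤ m' := le_sup_left
  have hHm' : MeasurableSet[m'] H :=
    (le_sup_right (a := m)) _ (MeasurableSpace.measurableSet_generateFrom rfl)
  have hem : MeasurableSet[m] (∅ : Set X) := @MeasurableSet.empty X m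
  have hum : MeasurableSet[m] (Set.univ : Set X) := @MeasurableSet.univ X m
  have hHne : H ≠ ∅ := fun h => hHm (h ▸ hem)
  have hHneAH : H ≠ AH := fun h => hHm (h ▸ hAH)
  have hτAHm : MeasurableSet[m] (τ AH) := (hτ1 AH hAH).1
  have hτAHae : AH =ᵐ[S] τ AH := measure_symmDiff_eq_zero_iff.mp (hτ1 AH hAH).2
  have hAHsub : S AH ≠ 0 → AH ⊆ τ AH := by
    intro hS
    rcases hatom _ (hτAHm.inter hAH) inter_subset_right with h | h
    · exfalso
      apply hS
      refine measure_mono_null ?_ (hτ1 AH hAH).2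
      intro x hx
      rw [Set.mem_symmDiff]
      exact Or.inl ⟨hx, fun hx' => Set.eq_empty_iff_forall_notMem.mp h x ⟨hx', hx⟩⟩
    · intro x hx
      rw [← h] at hx
      exact hx.1
  set ξH : Set X := if S H = 0 then ∅ else if S (AH \ H) = 0 then τ AH else H with hξHdef
  set ξD : Set X := if S H = 0 then τ AH else if S (AH \ H) = 0 then ∅ else τ AH \ H
    with hξDdef
  clear_value ξH ξD
  have hξHsub : ξH ⊆ τ AH := by
    rw [hξHdef]
    split_ifs with h1 h2
    · exact empty_subset _
    · exact subset_rfl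
    · exact hHAH.trans (hAHsub fun h0 => h1 (measure_mono_null hHAH h0))
  have hξHcompl : ξD ∪ τ AHᶜ = ξHᶜ := by
    have hc : τ AHᶜ = (τ AH)ᶜ := hτ6 AH hAH
    rw [hξHdef, hξDdef, hc]
    split_ifs with h1 h2
    · simp
    · simp
    · have hsub : H ⊆ τ AH := hHAH.trans (hAHsub fun h0 => h1 (measure_mono_null hHAH h0))
      ext x
      constructor
      · rintro (⟨_, hx2⟩ | hx)
        · exact hx2
        · exact fun hxH => hx (hsub hxH)
      · intro hx
        by_cases hxτ : x ∈ τ AH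
        · exact Or.inl ⟨hxτ, hx⟩
        · exact Or.inr hxτ
  have hξHnull : H =ᵐ[S] ξH := by
    rw [hξHdef]
    split_ifs with h1 h2
    · rw [← measure_symmDiff_eq_zero_iff]
      have he : symmDiff H (∅ : Set X) = H := by simp
      rw [he]; exact h1
    · refine Filter.EventuallyEq.trans ?_ hτAHae
      rw [← measure_symmDiff_eq_zero_iff]
      have he : symmDiff H AH = AH \ H := by
        rw [Set.symmDiff_def]
        simp [Set.diff_eq_empty.mpr hHAH]
      rw [he]; exact h2
    · exact Filter.EventuallyEq.refl _ _
  have hξHm' : MeasurableSet[m'] ξH := by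
    rw [hξHdef]; split_ifs
    · exact hle _ hem
    · exact hle _ hτAHm
    · exact hHm'
  -- every m'-measurable set has a representation
  have hrep : ∀ D : Set X, MeasurableSet[m'] D →
      ∃ A, MeasurableSet[m] A ∧ ∃ B, MeasurableSet[m] B ∧ D = (A ∩ H) ∪ (B ∩ Hᶜ) := by
    let P : MeasurableSpace X :=
      { MeasurableSet' := fun D => ∃ A, MeasurableSet[m] A ∧ ∃ B, MeasurableSet[m] B ∧
          D = (A ∩ H) ∪ (B ∩ Hᶜ)
        measurableSet_empty := ⟨∅, hem, ∅, hem, by simp⟩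
        measurableSet_compl := by
          rintro D ⟨A, hA, B, hB, rfl⟩
          exact ⟨Aᶜ, hA.compl, Bᶜ, hB.compl, by
            ext x; by_cases hx : x ∈ H <;> simp [hx]⟩
        measurableSet_iUnion := by
          intro f hf
          choose A hA B hB hE using hf
          refine ⟨⋃ i, A i, MeasurableSet.iUnion hA, ⋃ i, B i, MeasurableSet.iUnion hB, ?_⟩
          simp only [hE]
          rw [Set.iUnion_union_distrib, Set.iUnion_inter, Set.iUnion_inter] }
    intro D hD
    have hP : m' ≤ P := by
      rw [hm'def]
      refine sup_le (fun s hs => ⟨s, hs, s, hs, (Set.inter_union_compl s H).symm⟩) ?_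
      refine MeasurableSpace.generateFrom_le ?_
      rintro s hs
      rw [Set.mem_singleton_iff] at hs
      subst hs
      exact ⟨Set.univ, hum, ∅, hem, by simp⟩
    exact hP D hD
  -- pure set lemma: empty intersection of symmDiff with AH
  have sie : ∀ A A' : Set X, symmDiff A A' ∩ AH = ∅ → A ∩ AH = A' ∩ AH := by
    intro A A' h
    ext x
    constructor <;> rintro ⟨hx1, hx2⟩ <;> refine ⟨?_, hx2⟩ <;> by_contra hc
    · exact Set.eq_empty_iff_forall_notMem.mp h x ⟨Set.mem_symmDiff.mpr (Or.inl ⟨hx1, hc⟩), hx2⟩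
    · exact Set.eq_empty_iff_forall_notMem.mp h x ⟨Set.mem_symmDiff.mpr (Or.inr ⟨hx1, hc⟩), hx2⟩
  have tauInter : ∀ A A', MeasurableSet[m] A → MeasurableSet[m] A' → A ∩ AH = A' ∩ AH →
      ξH ∩ τ A = ξH ∩ τ A' := by
    intro A A' hA hA' h
    have h2 : τ A ∩ τ AH = τ A' ∩ τ AH := by
      rw [← hτ5 A AH hA hAH, ← hτ5 A' AH hA' hAH, h]
    ext x
    constructor <;> rintro ⟨h1x, h2x⟩ <;> refine ⟨h1x, ?_⟩
    · exact ((Set.ext_iff.mp h2 x).mp ⟨h2x, hξHsub h1x⟩).1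
    · exact ((Set.ext_iff.mp h2 x).mpr ⟨h2x, hξHsub h1x⟩).1
  -- well-definedness of the formula
  have wd : ∀ A A' B B', MeasurableSet[m] A → MeasurableSet[m] A' →
      MeasurableSet[m] B → MeasurableSet[m] B' →
      (A ∩ H) ∪ (B ∩ Hᶜ) = (A' ∩ H) ∪ (B' ∩ Hᶜ) →
      (ξH ∩ τ A) ∪ (ξHᶜ ∩ τ B) = (ξH ∩ τ A') ∪ (ξHᶜ ∩ τ B') := by
    intro A A' B B' hA hA' hB hB' heq
    have hAHeq : A ∩ H = A' ∩ H := by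
      ext x
      by_cases hx : x ∈ H
      · have := Set.ext_iff.mp heq x
        simp [hx] at this ⊢
        exact this
      · simp [hx]
    have hBeq : B = B' := by
      have hsub : symmDiff B B' ⊆ H := by
        intro x hx
        by_contra hxH
        have hthis := Set.ext_iff.mp heq x
        rw [Set.mem_symmDiff] at hx
        simp [hxH] at hthis
        tauto
      rcases hatom _ (hB.symmDiff hB') (hsub.trans hHAH) with h | h
      · exact symmDiff_eq_empty.mp h
      · exact ((hHneAH (Subset.antisymm hHAH (h ▸ hsub))).elim)
    have hAeq : A ∩ AH = A' ∩ AH := by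
      rcases hatom _ ((hA.symmDiff hA').inter hAH) inter_subset_right with h | h
      · exact sie A A' h
      · exfalso
        apply hHne
        ext x
        simp only [Set.mem_empty_iff_false, iff_false]
        intro hxH
        have hx0 : x ∈ symmDiff A A' ∩ AH := by rw [h]; exact hHAH hxH
        have hx1 := hx0.1
        have hthis := Set.ext_iff.mp hAHeq x
        rw [Set.mem_symmDiff] at hx1
        simp [hxH] at hthis
        tauto
    rw [tauInter A A' hA hA' hAeq, hBeq]
  -- define ξ
  set ξ : Set X → Set X := fun D =>
    if h : ∃ A, MeasurableSet[m] A ∧ ∃ B, MeasurableSet[m] B ∧ D = (A ∩ H) ∪ (B ∩ Hᶜ)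
    then (ξH ∩ τ h.choose) ∪ (ξHᶜ ∩ τ h.choose_spec.2.choose)
    else ∅ with hξdef
  clear_value ξ
  have key : ∀ A B, MeasurableSet[m] A → MeasurableSet[m] B →
      ξ ((A ∩ H) ∪ (B ∩ Hᶜ)) = (ξH ∩ τ A) ∪ (ξHᶜ ∩ τ B) := by
    intro A B hA hB
    have hex : ∃ A', MeasurableSet[m] A' ∧ ∃ B', MeasurableSet[m] B' ∧
        (A ∩ H) ∪ (B ∩ Hᶜ) = (A' ∩ H) ∪ (B' ∩ Hᶜ) := ⟨A, hA, B, hB, rfl⟩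
    simp only [hξdef]
    rw [dif_pos hex]
    exact wd _ A _ B hex.choose_spec.1 hA hex.choose_spec.2.choose_spec.1 hB
      hex.choose_spec.2.choose_spec.2.symm
  -- value on m-measurable sets
  have hext : ∀ C, MeasurableSet[m] C → ξ C = τ C := by
    intro C hC
    have h2 := key C C hC hC
    rw [Set.inter_union_compl C H] at h2
    rw [h2, ← Set.union_inter_distrib_right, Set.union_compl_self, Set.univ_inter]
  have hξHval : ξ H = ξH := by
    have h2 := key Set.univ ∅ hum hem
    have h1 : (Set.univ ∩ H) ∪ (∅ ∩ Hᶜ) = H := by simp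
    rw [h1] at h2
    rw [h2, hτ4, hτ3]
    simp
  have hξDval : ξ (AH \ H) = ξD := by
    have h2 := key ∅ AH hem hAH
    have h1 : (∅ ∩ H) ∪ (AH ∩ Hᶜ) = AH \ H := by simp [Set.diff_eq]
    rw [h1] at h2
    rw [h2, hτ3, Set.inter_empty, Set.empty_union, ← hξHcompl,
      Set.union_inter_distrib_right]
    have h3 : τ AHᶜ ∩ τ AH = ∅ := by
      rw [hτ6 AH hAH]; exact Set.compl_inter_self _
    rw [h3, Set.union_empty, hξDdef]
    split_ifs with h1 h2
    · exact Set.inter_self _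
    · exact Set.empty_inter _
    · exact Set.inter_eq_left.mpr Set.diff_subset
  have hξHcval : ξ Hᶜ = ξHᶜ := by
    have h2 := key ∅ Set.univ hem hum
    have h1 : (∅ ∩ H) ∪ (Set.univ ∩ Hᶜ) = Hᶜ := by simp
    rw [h1] at h2
    rw [h2, hτ3, hτ4]
    simp
  -- lifting properties
  have L1 : ∀ C, MeasurableSet[m'] C → MeasurableSet[m'] (ξ C) ∧ S (symmDiff C (ξ C)) = 0 := by
    intro C hC
    obtain ⟨A, hA, B, hB, rfl⟩ := hrep C hC
    rw [key A B hA hB]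
    constructor
    · exact (hξHm'.inter (hle _ (hτ1 A hA).1)).union (hξHm'.compl.inter (hle _ (hτ1 B hB).1))
    · rw [measure_symmDiff_eq_zero_iff]
      have hAae : A =ᵐ[S] τ A := measure_symmDiff_eq_zero_iff.mp (hτ1 A hA).2
      have hBae : B =ᵐ[S] τ B := measure_symmDiff_eq_zero_iff.mp (hτ1 B hB).2
      rw [Set.inter_comm A H, Set.inter_comm B Hᶜ]
      exact (hξHnull.inter hAae).union (hξHnull.compl.inter hBae)
  have L2 : ∀ C C', MeasurableSet[m'] C → MeasurableSet[m'] C' →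
      S (symmDiff C C') = 0 → ξ C = ξ C' := by
    intro C C' hC hC' hnull
    obtain ⟨A, hA, B, hB, rfl⟩ := hrep C hC
    obtain ⟨A', hA', B', hB', rfl⟩ := hrep C' hC'
    rw [key A B hA hB, key A' B' hA' hB']
    have hsub1 : symmDiff A A' ∩ H ⊆
        symmDiff ((A ∩ H) ∪ (B ∩ Hᶜ)) ((A' ∩ H) ∪ (B' ∩ Hᶜ)) := by
      rintro x ⟨hx, hxH⟩
      rw [Set.mem_symmDiff] at hx ⊢
      simp only [Set.mem_union, Set.mem_inter_iff, Set.mem_compl_iff]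
      rcases hx with ⟨h1, h2⟩ | ⟨h1, h2⟩
      · refine Or.inl ⟨Or.inl ⟨h1, hxH⟩, ?_⟩
        rintro (⟨ha, _⟩ | ⟨_, hh⟩)
        · exact h2 ha
        · exact hh hxH
      · refine Or.inr ⟨Or.inl ⟨h1, hxH⟩, ?_⟩
        rintro (⟨ha, _⟩ | ⟨_, hh⟩)
        · exact h2 ha
        · exact hh hxH
    have hsub2 : symmDiff B B' ∩ Hᶜ ⊆
        symmDiff ((A ∩ H) ∪ (B ∩ Hᶜ)) ((A' ∩ H) ∪ (B' ∩ Hᶜ)) := by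
      rintro x ⟨hx, hxH⟩
      rw [Set.mem_compl_iff] at hxH
      rw [Set.mem_symmDiff] at hx ⊢
      simp only [Set.mem_union, Set.mem_inter_iff, Set.mem_compl_iff]
      rcases hx with ⟨h1, h2⟩ | ⟨h1, h2⟩
      · refine Or.inl ⟨Or.inr ⟨h1, hxH⟩, ?_⟩
        rintro (⟨_, hh⟩ | ⟨hb, _⟩)
        · exact hxH hh
        · exact h2 hb
      · refine Or.inr ⟨Or.inr ⟨h1, hxH⟩, ?_⟩
        rintro (⟨_, hh⟩ | ⟨hb, _⟩)
        · exact hxH hh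
        · exact h2 hb
    have hA0 : S (symmDiff A A' ∩ H) = 0 := measure_mono_null hsub1 hnull
    have hB0 : S (symmDiff B B' ∩ Hᶜ) = 0 := measure_mono_null hsub2 hnull
    by_cases h1 : S H = 0
    · have hξH0 : ξH = ∅ := by rw [hξHdef, if_pos h1]
      rw [hξH0]
      simp only [Set.empty_inter, Set.empty_union, Set.compl_empty, Set.univ_inter]
      have hBB : τ B = τ B' := by
        apply hτ2 B B' hB hB'
        have hs : symmDiff B B' ⊆ (symmDiff B B' ∩ Hᶜ) ∪ H := by
          intro x hx
          by_cases hxH : x ∈ H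
          · exact Or.inr hxH
          · exact Or.inl ⟨hx, hxH⟩
        exact measure_mono_null hs (measure_union_null hB0 h1)
      rw [hBB]
    · by_cases h2 : S (AH \ H) = 0
      · have hξHv : ξH = τ AH := by rw [hξHdef, if_neg h1, if_pos h2]
        have hξHcv : ξHᶜ = τ AHᶜ := by rw [hξHv, hτ6 AH hAH]
        rw [hξHcv, hξHv, ← hτ5 AH A hAH hA, ← hτ5 AH A' hAH hA',
          ← hτ5 AHᶜ B hAH.compl hB, ← hτ5 AHᶜ B' hAH.compl hB']
        have e1 : τ (AH ∩ A) = τ (AH ∩ A') := by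
          apply hτ2 _ _ (hAH.inter hA) (hAH.inter hA')
          apply measure_mono_null ?_ (measure_union_null hA0 h2)
          intro x hx
          rw [Set.mem_symmDiff] at hx
          have hxAH : x ∈ AH := by rcases hx with ⟨⟨h, _⟩, _⟩ | ⟨⟨h, _⟩, _⟩ <;> exact h
          have hxAA : x ∈ symmDiff A A' := by
            rw [Set.mem_symmDiff]
            rcases hx with ⟨⟨_, ha⟩, hn⟩ | ⟨⟨_, ha⟩, hn⟩
            · exact Or.inl ⟨ha, fun h => hn ⟨hxAH, h⟩⟩
            · exact Or.inr ⟨ha, fun h => hn ⟨hxAH, h⟩⟩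
          by_cases hxH : x ∈ H
          · exact Or.inl ⟨hxAA, hxH⟩
          · exact Or.inr ⟨hxAH, hxH⟩
        have e2 : τ (AHᶜ ∩ B) = τ (AHᶜ ∩ B') := by
          apply hτ2 _ _ (hAH.compl.inter hB) (hAH.compl.inter hB')
          apply measure_mono_null ?_ hB0
          intro x hx
          rw [Set.mem_symmDiff] at hx
          have hxAH : x ∈ AHᶜ := by rcases hx with ⟨⟨h, _⟩, _⟩ | ⟨⟨h, _⟩, _⟩ <;> exact h
          have hxBB : x ∈ symmDiff B B' := by
            rw [Set.mem_symmDiff]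
            rcases hx with ⟨⟨_, ha⟩, hn⟩ | ⟨⟨_, ha⟩, hn⟩
            · exact Or.inl ⟨ha, fun h => hn ⟨hxAH, h⟩⟩
            · exact Or.inr ⟨ha, fun h => hn ⟨hxAH, h⟩⟩
          exact ⟨hxBB, fun hxH => hxAH (hHAH hxH)⟩
        rw [e1, e2]
      · have hξHv : ξH = H := by rw [hξHdef, if_neg h1, if_neg h2]
        have eA : ξH ∩ τ A = ξH ∩ τ A' := by
          rcases hatom _ ((hA.symmDiff hA').inter hAH) inter_subset_right with h | h
          · exact tauInter A A' hA hA' (sie A A' h)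
          · exfalso
            apply h1
            refine measure_mono_null ?_ hA0
            intro x hxH
            have hx0 : x ∈ symmDiff A A' ∩ AH := by rw [h]; exact hHAH hxH
            exact ⟨hx0.1, hxH⟩
        have eB : τ B = τ B' := by
          rcases hatom _ ((hB.symmDiff hB').inter hAH) inter_subset_right with h | h
          · apply hτ2 B B' hB hB'
            refine measure_mono_null ?_ hB0
            intro x hx
            refine ⟨hx, fun hxH => ?_⟩
            exact Set.eq_empty_iff_forall_notMem.mp h x ⟨hx, hHAH hxH⟩
          · exfalso
            apply h2
            refine measure_mono_null ?_ hB0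
            rintro x ⟨hxAH, hxH⟩
            have hx0 : x ∈ symmDiff B B' ∩ AH := by rw [h]; exact hxAH
            exact ⟨hx0.1, hxH⟩
        rw [eA, eB]
  have L3 : ξ ∅ = ∅ := by
    have h2 := key ∅ ∅ hem hem
    have h1 : ((∅ : Set X) ∩ H) ∪ (∅ ∩ Hᶜ) = ∅ := by simp
    rw [h1] at h2
    rw [h2, hτ3]
    simp
  have L4 : ξ Set.univ = Set.univ := by
    have h2 := key Set.univ Set.univ hum hum
    have h1 : (Set.univ ∩ H) ∪ (Set.univ ∩ Hᶜ) = (Set.univ : Set X) := by simp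
    rw [h1] at h2
    rw [h2, hτ4]
    simp
  have L5 : ∀ C C', MeasurableSet[m'] C → MeasurableSet[m'] C' → ξ (C ∩ C') = ξ C ∩ ξ C' := by
    intro C C' hC hC'
    obtain ⟨A, hA, B, hB, rfl⟩ := hrep C hC
    obtain ⟨A', hA', B', hB', rfl⟩ := hrep C' hC'
    have hint : ((A ∩ H) ∪ (B ∩ Hᶜ)) ∩ ((A' ∩ H) ∪ (B' ∩ Hᶜ)) =
        ((A ∩ A') ∩ H) ∪ ((B ∩ B') ∩ Hᶜ) := by
      ext x; by_cases hx : x ∈ H <;> simp [hx] <;> tauto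
    rw [hint, key _ _ (hA.inter hA') (hB.inter hB'), key A B hA hB, key A' B' hA' hB',
      hτ5 A A' hA hA', hτ5 B B' hB hB']
    ext x; by_cases hx : x ∈ ξH <;> simp [hx] <;> tauto
  have L6 : ∀ C, MeasurableSet[m'] C → ξ Cᶜ = (ξ C)ᶜ := by
    intro C hC
    obtain ⟨A, hA, B, hB, rfl⟩ := hrep C hC
    have hcomp : ((A ∩ H) ∪ (B ∩ Hᶜ))ᶜ = (Aᶜ ∩ H) ∪ (Bᶜ ∩ Hᶜ) := by
      ext x; by_cases hx : x ∈ H <;> simp [hx]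
    rw [hcomp, key _ _ hA.compl hB.compl, key A B hA hB, hτ6 A hA, hτ6 B hB]
    ext x; by_cases hx : x ∈ ξH <;> simp [hx] <;> tauto
  refine ⟨ξ, ⟨L1, L2, L3, L4, L5, L6⟩, hext, hξHval, hξDval, ?_, ?_⟩
  · rw [hξHcval, ← hξHcompl, hξDval]
  · intro A B hA hB
    rw [key A B hA hB, hξHval, hξHcval]
end
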